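/- Fix a finite nonempty set Γ of R-formulas, with the reachability relation ⇒ and the witness set B constructed from Γ. The following are equivalent: (1) Γ ⊢_R ⊥ for some absurdity ⊥; (2) Γ is unsatisfiable; (3) Condition (C) holds, i.e., there exist elements b_{V,i}, b_{W,j} of B, unary atoms q, o, and a binary atom r such that one of the following is true: (a) V ⇒ q and V ⇒ q̄; (b) V ⇒ ∃(q,r̄), V ⇒ ∀(o,r), and q ⇒ o; (c) V ⇒ ∀(q,r̄), V ⇒ ∃(o,r), and o ⇒ q; (d) V ⇒ ∀(q,r̄), V ⇒ ∀(o,r), W ⇒ q, and W ⇒ o. -/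

import Mathlib

/-!
Syllogistic logics (Pratt-Hartmann & Moss, "Logics for the Relational Syllogistic").

Unary atoms and binary atoms are encoded by `ℕ` (two disjoint copies).
-/

namespace Syllogistic

/-- Unary literals: a unary atom `p` or its negation `p̄`. -/
inductive Lit : Type
  | pos : ℕ → Lit
  | neg : ℕ → Lit
deriving DecidableEq

/-- Binary literals: a binary atom `r` or its negation `r̄`. -/
inductive BLit : Type
  | pos : ℕ → BLit
  | neg : ℕ → BLit
deriving DecidableEq

/-- Bar (negation) on unary literals. -/
def Lit.bar : Lit → Lit
  | .pos p => .neg p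
  | .neg p => .pos p

/-- Bar (negation) on binary literals. -/
def BLit.bar : BLit → BLit
  | .pos r => .neg r
  | .neg r => .pos r

/-- A unary literal is positive if it is an atom. -/
def Lit.isPos : Lit → Prop
  | .pos _ => True
  | .neg _ => False

/-- A binary literal is positive if it is an atom. -/
def BLit.isPos : BLit → Prop
  | .pos _ => True
  | .neg _ => False

/-- e-terms: a unary literal `l`, or `∃(l,t)`, or `∀(l,t)`. -/
inductive ETerm : Type
  | lit : Lit → ETerm
  | ex : Lit → BLit → ETerm
  | al : Lit → BLit → ETerm
deriving DecidableEq

/-- The e-term consisting of a single positive unary atom. -/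
def atomE (p : ℕ) : ETerm := .lit (.pos p)

/-- Bar on e-terms: `∀(l,t)‾ = ∃(l,t̄)` and `∃(l,t)‾ = ∀(l,t̄)`. -/
def ETerm.bar : ETerm → ETerm
  | .lit l => .lit l.bar
  | .ex l t => .al l t.bar
  | .al l t => .ex l t.bar

/-- c-terms: a unary literal, or `∃(p,t)`/`∀(p,t)` with `p` a unary atom. -/
def ETerm.isC : ETerm → Prop
  | .lit _ => True
  | .ex l _ => l.isPos
  | .al l _ => l.isPos

/-- Positive c-terms: the literals occurring in them are positive. -/
def ETerm.isPosC : ETerm → Prop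
  | .lit l => l.isPos
  | .ex l t => l.isPos ∧ t.isPos
  | .al l t => l.isPos ∧ t.isPos

/-- R*†-formulas: `∃(e,f)` or `∀(e,f)` for e-terms `e`, `f`. -/
inductive Formula : Type
  | ex : ETerm → ETerm → Formula
  | al : ETerm → ETerm → Formula
deriving DecidableEq

/-- Negation of a formula: `∀(e,f)‾ = ∃(e,f̄)`, `∃(e,f)‾ = ∀(e,f̄)`. -/
def Formula.bar : Formula → Formula
  | .ex e f => .al e f.bar
  | .al e f => .ex e f.bar

/-- The silent identification: `∃(e,f)` with `∃(f,e)`, and `∀(e,f)` with `∀(f̄,ē)`. -/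
def Formula.swap : Formula → Formula
  | .ex e f => .ex f e
  | .al e f => .al f.bar e.bar

/-- Two formulas are identified if they are equal or are swaps of each other. -/
def FormEquiv (φ ψ : Formula) : Prop := ψ = φ ∨ ψ = φ.swap

/-- An absurdity is a formula of the form `∃(e,ē)`. -/
def IsAbsurd (φ : Formula) : Prop := ∃ e : ETerm, φ = .ex e e.bar

/-- A substitution maps unary atoms to unary atoms and binary atoms to binary atoms. -/
structure Subst where
  u : ℕ → ℕ
  b : ℕ → ℕ

def Lit.subst (g : Subst) : Lit → Lit
  | .pos p => .pos (g.u p)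
  | .neg p => .neg (g.u p)

def BLit.subst (g : Subst) : BLit → BLit
  | .pos r => .pos (g.b r)
  | .neg r => .neg (g.b r)

def ETerm.subst (g : Subst) : ETerm → ETerm
  | .lit l => .lit (l.subst g)
  | .ex l t => .ex (l.subst g) (t.subst g)
  | .al l t => .al (l.subst g) (t.subst g)

/-- Atom-wise application of a substitution to a formula. -/
def Formula.subst (g : Subst) : Formula → Formula
  | .ex e f => .ex (e.subst g) (f.subst g)
  | .al e f => .al (e.subst g) (f.subst g)

/-- A structure over a domain `A`: an interpretation of every unary atom as a
subset of `A` and of every binary atom as a binary relation on `A`.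
(Non-emptiness of the domain is imposed where structures are quantified over.) -/
structure Interp (A : Type) where
  up : ℕ → Set A
  br : ℕ → Set (A × A)

def Interp.litI {A : Type} (M : Interp A) : Lit → Set A
  | .pos p => M.up p
  | .neg p => (M.up p)ᶜ

def Interp.blitI {A : Type} (M : Interp A) : BLit → Set (A × A)
  | .pos r => M.br r
  | .neg r => (M.br r)ᶜ

/-- Interpretation of e-terms. -/
def Interp.etermI {A : Type} (M : Interp A) : ETerm → Set A
  | .lit l => M.litI l
  | .ex l t => {a | ∃ b ∈ M.litI l, (a, b) ∈ M.blitI t}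
  | .al l t => {a | ∀ b ∈ M.litI l, (a, b) ∈ M.blitI t}

/-- Truth of a formula in a structure. -/
def Interp.Sat {A : Type} (M : Interp A) : Formula → Prop
  | .al e f => M.etermI e ⊆ M.etermI f
  | .ex e f => (M.etermI e ∩ M.etermI f).Nonempty

/-- Truth of a set of formulas in a structure. -/
def Interp.SatSet {A : Type} (M : Interp A) (Θ : Set Formula) : Prop :=
  ∀ θ ∈ Θ, M.Sat θ

/-- `Θ ⊨ θ`: every structure (with non-empty domain) satisfying `Θ` satisfies `θ`. -/
def Entails (Θ : Set Formula) (θ : Formula) : Prop :=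
  ∀ (A : Type), Nonempty A → ∀ M : Interp A, M.SatSet Θ → M.Sat θ

/-- `Θ` is satisfied in some structure with non-empty domain. -/
def Satisfiable (Θ : Set Formula) : Prop :=
  ∃ (A : Type), Nonempty A ∧ ∃ M : Interp A, M.SatSet Θ

/-- A syllogistic rule: a finite set of antecedents together with a consequent. -/
structure SylRule where
  ants : Finset Formula
  con : Formula

/-- A rule is sound if its antecedents entail its consequent. -/
def SylRule.Sound (R : SylRule) : Prop := Entails (↑R.ants) R.con

/-- A rule is a rule *in* the fragment `F` if all its formulas lie in `F`. -/
def RuleIn (F : Set Formula) (R : SylRule) : Prop :=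
  (∀ ψ ∈ R.ants, ψ ∈ F) ∧ R.con ∈ F

/-- The instance of a rule under a substitution. -/
def SylRule.inst (g : Subst) (R : SylRule) : SylRule :=
  ⟨R.ants.image (Formula.subst g), R.con.subst g⟩

/-- Two rules are the same modulo the identification of formulas. -/
def RuleEquiv (R R' : SylRule) : Prop :=
  (∀ ψ ∈ R.ants, ∃ ψ' ∈ R'.ants, FormEquiv ψ ψ') ∧
  (∀ ψ' ∈ R'.ants, ∃ ψ ∈ R.ants, FormEquiv ψ ψ') ∧
  FormEquiv R.con R'.con

/-- The direct derivation relation `⊢_X` determined by a set `X` of syllogistic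
rules: premises may be used, and instances of rules applied; formulas are
treated up to the silent identification. -/
inductive Derives (X : Set SylRule) : Set Formula → Formula → Prop
  | mem {Θ : Set Formula} {θ : Formula} : θ ∈ Θ → Derives X Θ θ
  | rule {Θ : Set Formula} (R : SylRule) (g : Subst) :
      R ∈ X → (∀ ψ ∈ R.ants, Derives X Θ (ψ.subst g)) →
      Derives X Θ (R.con.subst g)
  | ident {Θ : Set Formula} {φ ψ : Formula} :
      Derives X Θ φ → FormEquiv φ ψ → Derives X Θ ψ

/-- The indirect derivation relation `⊩_X`: as `⊢_X`, together with
*reductio ad absurdum*. -/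
inductive IDerives (X : Set SylRule) : Set Formula → Formula → Prop
  | mem {Θ : Set Formula} {θ : Formula} : θ ∈ Θ → IDerives X Θ θ
  | rule {Θ : Set Formula} (R : SylRule) (g : Subst) :
      R ∈ X → (∀ ψ ∈ R.ants, IDerives X Θ (ψ.subst g)) →
      IDerives X Θ (R.con.subst g)
  | ident {Θ : Set Formula} {φ ψ : Formula} :
      IDerives X Θ φ → FormEquiv φ ψ → IDerives X Θ ψ
  | raa {Θ : Set Formula} {θ b : Formula} :
      IsAbsurd b → IDerives X (Θ ∪ {θ.bar}) b → IDerives X Θ θ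

/-- Soundness of a derivation relation for the fragment `F`. -/
def SoundFor (F : Set Formula) (D : Set Formula → Formula → Prop) : Prop :=
  ∀ (Θ : Set Formula) (θ : Formula), Θ ⊆ F → θ ∈ F → D Θ θ → Entails Θ θ

/-- Completeness of a derivation relation for the fragment `F`. -/
def CompleteFor (F : Set Formula) (D : Set Formula → Formula → Prop) : Prop :=
  ∀ (Θ : Set Formula) (θ : Formula), Θ ⊆ F → θ ∈ F → Entails Θ θ → D Θ θ

/-- Refutation-completeness for the fragment `F`: every unsatisfiable set of
`F`-formulas derives some absurdity. -/
def RefutationCompleteFor (F : Set Formula) (D : Set Formula → Formula → Prop) : Prop :=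
  ∀ Θ : Set Formula, Θ ⊆ F → ¬ Satisfiable Θ → ∃ b, IsAbsurd b ∧ D Θ b

/-- Consistency of a set of formulas with respect to `⊩_X`. -/
def Consistent (X : Set SylRule) (Θ : Set Formula) : Prop :=
  ¬ ∃ b, IsAbsurd b ∧ IDerives X Θ b

/-! ### The six fragments -/

/-- The fragment `S`: `∃(p,l)`, `∃(l,p)`, `∀(p,l)`, `∀(l,p̄)`. -/
def FragS : Set Formula :=
  {φ | (∃ (p : ℕ) (l : Lit), φ = .ex (atomE p) (.lit l)) ∨
       (∃ (p : ℕ) (l : Lit), φ = .ex (.lit l) (atomE p)) ∨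
       (∃ (p : ℕ) (l : Lit), φ = .al (atomE p) (.lit l)) ∨
       (∃ (p : ℕ) (l : Lit), φ = .al (.lit l) (.lit (.neg p)))}

/-- The fragment `S†`: `∃(l,m)`, `∀(l,m)` for unary literals `l`, `m`. -/
def FragSdag : Set Formula :=
  {φ | ∃ l m : Lit, φ = .ex (.lit l) (.lit m) ∨ φ = .al (.lit l) (.lit m)}

/-- The fragment `R`: `∃(p,c)`, `∃(c,p)`, `∀(p,c)`, `∀(c,p̄)` for a c-term `c`. -/
def FragR : Set Formula :=
  {φ | ∃ (p : ℕ) (c : ETerm), c.isC ∧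
       (φ = .ex (atomE p) c ∨ φ = .ex c (atomE p) ∨
        φ = .al (atomE p) c ∨ φ = .al c (.lit (.neg p)))}

/-- The fragment `R†`: `∃(l,e)`, `∃(e,l)`, `∀(l,e)`, `∀(e,l)` for an e-term `e`. -/
def FragRdag : Set Formula :=
  {φ | ∃ (l : Lit) (e : ETerm),
       φ = .ex (.lit l) e ∨ φ = .ex e (.lit l) ∨
       φ = .al (.lit l) e ∨ φ = .al e (.lit l)}

/-- The fragment `R*`: `∃(c⁺,d)`, `∃(d,c⁺)`, `∀(c⁺,d)`, `∀(d,c⁺‾)` with `c⁺` a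
positive c-term and `d` a c-term. -/
def FragRstar : Set Formula :=
  {φ | ∃ c d : ETerm, c.isPosC ∧ d.isC ∧
       (φ = .ex c d ∨ φ = .ex d c ∨ φ = .al c d ∨ φ = .al d c.bar)}

/-- The fragment `R*†`: all formulas. -/
def FragRstardag : Set Formula := Set.univ

/-- The six syllogistic fragments. -/
def IsFragment (F : Set Formula) : Prop :=
  F = FragS ∨ F = FragSdag ∨ F = FragR ∨ F = FragRdag ∨ F = FragRstar ∨ F = FragRstardag

/-! ### Rule sets -/

/-- The rule set `S`: (D1), (D2), (D3), (B), (A), (T), (I), (X). -/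
def RuleSetS : Set SylRule :=
  {R | (∃ (p q : ℕ) (l : Lit),
          R = ⟨{.al (atomE q) (.lit l), .ex (atomE p) (atomE q)}, .ex (atomE p) (.lit l)⟩) ∨
       (∃ (p q : ℕ) (l : Lit),
          R = ⟨{.ex (atomE p) (.lit l), .al (atomE p) (atomE q)}, .ex (atomE q) (.lit l)⟩) ∨
       (∃ (p q : ℕ) (l : Lit),
          R = ⟨{.al (atomE q) (.lit l.bar), .ex (atomE p) (.lit l)}, .ex (atomE p) (.lit (.neg q))⟩) ∨
       (∃ (p q : ℕ) (l : Lit),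
          R = ⟨{.al (atomE p) (atomE q), .al (atomE q) (.lit l)}, .al (atomE p) (.lit l)⟩) ∨
       (∃ (p : ℕ) (l : Lit),
          R = ⟨{.al (atomE p) (.lit (.neg p))}, .al (atomE p) (.lit l)⟩) ∨
       (∃ p : ℕ, R = ⟨∅, .al (atomE p) (atomE p)⟩) ∨
       (∃ (p : ℕ) (l : Lit),
          R = ⟨{.ex (atomE p) (.lit l)}, .ex (atomE p) (atomE p)⟩) ∨
       (∃ φ ψ : Formula, φ ∈ FragS ∧ ψ ∈ FragS ∧ R = ⟨{ψ, ψ.bar}, φ⟩)}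

/-- The rule set `S†`: (D), (B), (A), (T), (I), (N), (X). -/
def RuleSetSdag : Set SylRule :=
  {R | (∃ l m n : Lit,
          R = ⟨{.ex (.lit l) (.lit n), .al (.lit l) (.lit m)}, .ex (.lit m) (.lit n)⟩) ∨
       (∃ l m n : Lit,
          R = ⟨{.al (.lit l) (.lit m), .al (.lit m) (.lit n)}, .al (.lit l) (.lit n)⟩) ∨
       (∃ l m : Lit, R = ⟨{.al (.lit l) (.lit l.bar)}, .al (.lit l) (.lit m)⟩) ∨
       (∃ l : Lit, R = ⟨∅, .al (.lit l) (.lit l)⟩) ∨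
       (∃ l m : Lit, R = ⟨{.ex (.lit l) (.lit m)}, .ex (.lit l) (.lit l)⟩) ∨
       (∃ l : Lit, R = ⟨{.al (.lit l.bar) (.lit l)}, .ex (.lit l) (.lit l)⟩) ∨
       (∃ φ ψ : Formula, φ ∈ FragSdag ∧ ψ ∈ FragSdag ∧ R = ⟨{ψ, ψ.bar}, φ⟩)}

/-- The rules (B), (T) and (A) of the rule set `S†`. -/
def RuleSetBTA : Set SylRule :=
  {R | (∃ l m n : Lit,
          R = ⟨{.al (.lit l) (.lit m), .al (.lit m) (.lit n)}, .al (.lit l) (.lit n)⟩) ∨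
       (∃ l : Lit, R = ⟨∅, .al (.lit l) (.lit l)⟩) ∨
       (∃ l m : Lit, R = ⟨{.al (.lit l) (.lit l.bar)}, .al (.lit l) (.lit m)⟩)}

/-- The rule set `R`: (D1), (D2), (D3), (B), (T), (I), (A), (II), (∀∀), (∃∃), (∀∃). -/
def RuleSetR : Set SylRule :=
  {R | (∃ (p q : ℕ) (c : ETerm), c.isC ∧
          R = ⟨{.ex (atomE p) (atomE q), .al (atomE q) c}, .ex (atomE p) c⟩) ∨
       (∃ (p q : ℕ) (c : ETerm), c.isC ∧
          R = ⟨{.al (atomE p) (atomE q), .ex (atomE p) c}, .ex (atomE q) c⟩) ∨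
       (∃ (p q : ℕ) (c : ETerm), c.isC ∧
          R = ⟨{.al (atomE q) c.bar, .ex (atomE p) c}, .ex (atomE p) (.lit (.neg q))⟩) ∨
       (∃ (p q : ℕ) (c : ETerm), c.isC ∧
          R = ⟨{.al (atomE p) (atomE q), .al (atomE q) c}, .al (atomE p) c⟩) ∨
       (∃ p : ℕ, R = ⟨∅, .al (atomE p) (atomE p)⟩) ∨
       (∃ (p : ℕ) (c : ETerm), c.isC ∧
          R = ⟨{.ex (atomE p) c}, .ex (atomE p) (atomE p)⟩) ∨
       (∃ (p : ℕ) (c : ETerm), c.isC ∧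
          R = ⟨{.al (atomE p) (.lit (.neg p))}, .al (atomE p) c⟩) ∨
       (∃ (p q : ℕ) (t : BLit),
          R = ⟨{.ex (atomE p) (.ex (.pos q) t)}, .ex (atomE q) (atomE q)⟩) ∨
       (∃ (p q q' : ℕ) (t : BLit),
          R = ⟨{.al (atomE p) (.al (.pos q') t), .ex (atomE q) (atomE q')},
               .al (atomE p) (.ex (.pos q) t)⟩) ∨
       (∃ (p q q' : ℕ) (t : BLit),
          R = ⟨{.ex (atomE p) (.ex (.pos q) t), .al (atomE q) (atomE q')},
               .ex (atomE p) (.ex (.pos q') t)⟩) ∨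
       (∃ (p q q' : ℕ) (t : BLit),
          R = ⟨{.al (atomE p) (.ex (.pos q) t), .al (atomE q) (atomE q')},
               .al (atomE p) (.ex (.pos q') t)⟩)}

/-- The rule set `R*`: (T), (I), (B), (D1), (D2), (J), (K), (L), (II), (Z), (W). -/
def RuleSetRstar : Set SylRule :=
  {R | (∃ c : ETerm, c.isPosC ∧ R = ⟨∅, .al c c⟩) ∨
       (∃ c d : ETerm, c.isPosC ∧ d.isC ∧ R = ⟨{.ex c d}, .ex c c⟩) ∨
       (∃ b c d : ETerm, b.isPosC ∧ c.isPosC ∧ d.isC ∧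
          R = ⟨{.al b c, .al c d}, .al b d⟩) ∨
       (∃ b c d : ETerm, b.isPosC ∧ c.isPosC ∧ d.isC ∧
          R = ⟨{.ex b c, .al c d}, .ex b d⟩) ∨
       (∃ b c d : ETerm, b.isPosC ∧ c.isPosC ∧ d.isC ∧
          R = ⟨{.al b c, .ex b d}, .ex c d⟩) ∨
       (∃ p q r : ℕ,
          R = ⟨{.al (atomE p) (atomE q)},
               .al (.al (.pos q) (.pos r)) (.al (.pos p) (.pos r))⟩) ∨
       (∃ p q r : ℕ,
          R = ⟨{.al (atomE p) (atomE q)},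
               .al (.ex (.pos p) (.pos r)) (.ex (.pos q) (.pos r))⟩) ∨
       (∃ p q r : ℕ,
          R = ⟨{.ex (atomE p) (atomE q)},
               .al (.al (.pos p) (.pos r)) (.ex (.pos q) (.pos r))⟩) ∨
       (∃ p q r : ℕ,
          R = ⟨{.ex (atomE q) (.ex (.pos p) (.pos r))}, .ex (atomE p) (atomE p)⟩) ∨
       (∃ (p r : ℕ) (c : ETerm), c.isPosC ∧
          R = ⟨{.al (atomE p) (.lit (.neg p))}, .al c (.al (.pos p) (.pos r))⟩) ∨
       (∃ p r : ℕ,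
          R = ⟨{.al (atomE p) (.lit (.neg p))},
               .ex (.al (.pos p) (.pos r)) (.al (.pos p) (.pos r))⟩)}

/-! ### Auxiliary notions for particular statements -/

/-- Universal S†-formulas. -/
def IsUnivSdag (φ : Formula) : Prop := ∃ l m : Lit, φ = .al (.lit l) (.lit m)

/-- Existential S†-formulas. -/
def IsExSdag (φ : Formula) : Prop := ∃ l m : Lit, φ = .ex (.lit l) (.lit m)

/-- The closure `V^Φ` of a set of unary literals: all `m` with
`Φ ⊢_BTA ∀(l,m)` for some `l ∈ V`. -/
def litClosure (Φ : Set Formula) (V : Set Lit) : Set Lit :=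
  {m | ∃ l ∈ V, Derives RuleSetBTA Φ (.al (.lit l) (.lit m))}

/-- Membership in a set of formulas, modulo the silent identification. -/
def MemMod (Γ : Set Formula) (φ : Formula) : Prop := ∃ ψ ∈ Γ, FormEquiv φ ψ

/-- The reachability relation `c ⇒ d` determined by `Γ`. -/
def Reach (Γ : Set Formula) (c d : ETerm) : Prop :=
  c = d ∨ ∃ (k : ℕ) (p : ℕ → ℕ), c = atomE (p 0) ∧
    MemMod Γ (.al (atomE (p k)) d) ∧
    ∀ i < k, MemMod Γ (.al (atomE (p i)) (atomE (p (i + 1))))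

/-- `V ⇒ d` for a set `V` of c-terms. -/
def ReachSet (Γ : Set Formula) (V : Set ETerm) (d : ETerm) : Prop :=
  ∃ c ∈ V, Reach Γ c d

/-- The witness sets `B_k`; the formal object `b_{V,i}` is encoded as the
pair `(V, i)`. -/
def BSet (Γ : Set Formula) : ℕ → Set (Set ETerm × ℕ)
  | 0 => {x | ∃ (p : ℕ) (c : ETerm), c.isC ∧ MemMod Γ (.ex (atomE p) c) ∧
            x = ({atomE p, c}, 0)}
  | k + 1 => BSet Γ k ∪
      {x | ∃ (p i : ℕ), (i = 1 ∨ i = 2) ∧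
        (∃ y ∈ BSet Γ k, ∃ t : BLit, ReachSet Γ y.1 (.ex (.pos p) t)) ∧
        x = ({atomE p}, i)}

/-- The witness set `B = ⋃_k B_k`. -/
def BAll (Γ : Set Formula) : Set (Set ETerm × ℕ) := ⋃ k, BSet Γ k

/-- Condition (C). -/
def CondC (Γ : Set Formula) : Prop :=
  ∃ (V : Set ETerm) (i : ℕ) (W : Set ETerm) (j : ℕ),
    (V, i) ∈ BAll Γ ∧ (W, j) ∈ BAll Γ ∧
    ∃ q o r : ℕ,
      ((ReachSet Γ V (atomE q) ∧ ReachSet Γ V (.lit (.neg q))) ∨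
       (ReachSet Γ V (.ex (.pos q) (.neg r)) ∧ ReachSet Γ V (.al (.pos o) (.pos r)) ∧
         Reach Γ (atomE q) (atomE o)) ∨
       (ReachSet Γ V (.al (.pos q) (.neg r)) ∧ ReachSet Γ V (.ex (.pos o) (.pos r)) ∧
         Reach Γ (atomE o) (atomE q)) ∨
       (ReachSet Γ V (.al (.pos q) (.neg r)) ∧ ReachSet Γ V (.al (.pos o) (.pos r)) ∧
         ReachSet Γ W (atomE q) ∧ ReachSet Γ W (atomE o)))

/-- The set `Γ` of R-formulas used in the proof that `R` admits no sound
and complete direct syllogistic system (indices `0,…,n-1`). -/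
def GammaSet (n : ℕ) (p : ℕ → ℕ) (r : ℕ) : Set Formula :=
  {φ | (∃ i, i + 1 < n ∧ φ = .al (atomE (p i)) (.ex (.pos (p (i + 1))) (.pos r))) ∨
       φ = .al (atomE (p 0)) (.al (.pos (p (n - 1))) (.pos r)) ∨
       (∃ q : ℕ, φ = .al (atomE q) (atomE q)) ∨
       (∃ i j, i < j ∧ j < n ∧ φ = .al (atomE (p i)) (.lit (.neg (p j))))}

/-- `Γ` is R*-complete: for every R*-formula `θ`, `θ ∈ Γ` or `θ̄ ∈ Γ`. -/
def RstarComplete (Γ : Set Formula) : Prop :=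
  ∀ θ ∈ FragRstar, θ ∈ Γ ∨ Formula.bar θ ∈ Γ

/-- Domain of the canonical structure for `Γ`: triples `(c₁,c₂,Q)` of two
positive c-terms and a quantifier (`Bool`, with `true` rendering `∃` and
`false` rendering `∀`) such that `Γ ⊩_{R*} ∃(c₁,c₂)`. -/
abbrev CanonA (Γ : Set Formula) : Type :=
  {x : ETerm × ETerm × Bool //
    x.1.isPosC ∧ x.2.1.isPosC ∧ IDerives RuleSetRstar Γ (.ex x.1 x.2.1)}

/-- The canonical structure constructed from `Γ`. -/
def CanonInterp (Γ : Set Formula) : Interp (CanonA Γ) where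
  up p := {x | IDerives RuleSetRstar Γ (.al x.val.1 (atomE p)) ∨
               IDerives RuleSetRstar Γ (.al x.val.2.1 (atomE p))}
  br r := {ab |
      (∃ c ∈ ({ab.1.val.1, ab.1.val.2.1} : Set ETerm),
       ∃ d ∈ ({ab.2.val.1, ab.2.val.2.1} : Set ETerm),
       ∃ q : ℕ,
         IDerives RuleSetRstar Γ (.al c (.al (.pos q) (.pos r))) ∧
         IDerives RuleSetRstar Γ (.al d (atomE q))) ∨
      (ab.2.val.2.2 = true ∧
       ∃ q : ℕ, ab.2.val.1 = atomE q ∧ ab.2.val.2.1 = atomE q ∧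
       ∃ c ∈ ({ab.1.val.1, ab.1.val.2.1} : Set ETerm),
         IDerives RuleSetRstar Γ (.al c (.ex (.pos q) (.pos r))))}


/-! Derivations are sound rule by rule, and (C) yields a derivation of an absurdity: every
`b_{V,i} ∈ B` has `V = {p, c}` with `Γ ⊢ ∃(p,c)`, two distinct c-terms `d₁`, `d₂` reachable from
such a `V` give an atom `a` with `Γ ⊢ ∃(a,d₁)` and `Γ ⊢ ∀(a,d₂)` (or the other way round), and
each clause of (C) turns this, via (∃∃), (∀∃) or (∀∀), into premises of (D3) concluding `∃(a,ā)`.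
If (C) fails, `B` plus a dummy point carries a model of `Γ`: `b_V` satisfies the atoms reachable
from `V`, and `r` relates `b_V` to `b_W` when `V ⇒ ∀(o,r)` and `W ⇒ o`, or when `W = {q}` with
index `1` and `V ⇒ ∃(q,r)`. Every c-term reachable from `V` then holds at `b_V`; the cases where
this could fail are exactly the clauses of (C). -/

@[simp] lemma Lit.bar_bar (l : Lit) : l.bar.bar = l := by cases l <;> rfl

@[simp] lemma BLit.bar_bar (t : BLit) : t.bar.bar = t := by cases t <;> rfl

@[simp] lemma ETerm.bar_bar (e : ETerm) : e.bar.bar = e := by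
  cases e <;> simp [ETerm.bar]

lemma ETerm.isC.bar {c : ETerm} (hc : c.isC) : c.bar.isC := by
  cases c <;> exact hc

@[simp] lemma Formula.swap_swap (φ : Formula) : φ.swap.swap = φ := by
  cases φ <;> simp [Formula.swap]

lemma FormEquiv.symm {φ ψ : Formula} (h : FormEquiv φ ψ) : FormEquiv ψ φ := by
  rcases h with rfl | rfl
  · exact Or.inl rfl
  · exact Or.inr (Formula.swap_swap φ).symm

@[simp] lemma atomE_inj {p q : ℕ} : atomE p = atomE q ↔ p = q := by
  simp [atomE]

namespace Interp

variable {A : Type} (M : Interp A)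

lemma litI_bar (l : Lit) : M.litI l.bar = (M.litI l)ᶜ := by
  cases l <;> simp [Lit.bar, litI]

lemma blitI_bar (t : BLit) : M.blitI t.bar = (M.blitI t)ᶜ := by
  cases t <;> simp [BLit.bar, blitI]

lemma etermI_bar (e : ETerm) : M.etermI e.bar = (M.etermI e)ᶜ := by
  cases e <;> ext <;> simp [ETerm.bar, etermI, litI_bar, blitI_bar]

lemma sat_swap (φ : Formula) : M.Sat φ.swap ↔ M.Sat φ := by
  cases φ with
  | ex e f => simp only [Formula.swap, Sat, Set.inter_comm]
  | al e f => simp only [Formula.swap, Sat, etermI_bar, Set.compl_subset_compl]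

lemma sat_iff_of_formEquiv {φ ψ : Formula} (h : FormEquiv φ ψ) : M.Sat ψ ↔ M.Sat φ := by
  rcases h with rfl | rfl
  · rfl
  · exact M.sat_swap φ

lemma not_sat_of_isAbsurd {b : Formula} (hb : IsAbsurd b) : ¬ M.Sat b := by
  obtain ⟨e, rfl⟩ := hb
  rintro ⟨a, ha, ha'⟩
  rw [etermI_bar] at ha'
  exact ha' ha

def comap (g : Subst) : Interp A := ⟨fun p => M.up (g.u p), fun r => M.br (g.b r)⟩

lemma litI_subst (g : Subst) (l : Lit) : M.litI (l.subst g) = (M.comap g).litI l := by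
  cases l <;> rfl

lemma blitI_subst (g : Subst) (t : BLit) : M.blitI (t.subst g) = (M.comap g).blitI t := by
  cases t <;> rfl

lemma etermI_subst (g : Subst) (e : ETerm) : M.etermI (e.subst g) = (M.comap g).etermI e := by
  cases e <;> simp only [ETerm.subst, etermI, litI_subst, blitI_subst]

lemma sat_subst (g : Subst) (φ : Formula) : M.Sat (φ.subst g) ↔ (M.comap g).Sat φ := by
  cases φ <;> simp only [Formula.subst, Sat, etermI_subst]

end Interp

theorem Derives.entails {X : Set SylRule} (hX : ∀ R ∈ X, R.Sound) {Θ : Set Formula}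
    {θ : Formula} (h : Derives X Θ θ) : Entails Θ θ := by
  induction h with
  | mem h => exact fun _ _ M hM => hM _ h
  | ident _ he ih => exact fun A hA M hM => (M.sat_iff_of_formEquiv he).mpr (ih A hA M hM)
  | rule R g hR _ ih =>
    intro A hA M hM
    rw [Interp.sat_subst]
    exact hX R hR A hA (M.comap g) fun ψ hψ => (M.sat_subst g ψ).mp (ih ψ hψ A hA M hM)

lemma SylRule.sound_nil {φ : Formula} (h : ∀ {A : Type} (M : Interp A), M.Sat φ) :
    SylRule.Sound ⟨∅, φ⟩ :=
  fun _ _ M _ => h M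

lemma SylRule.sound_singleton {φ χ : Formula}
    (h : ∀ {A : Type} (M : Interp A), M.Sat φ → M.Sat χ) : SylRule.Sound ⟨{φ}, χ⟩ :=
  fun _ _ M hM => h M (hM φ (by simp))

lemma SylRule.sound_pair {φ ψ χ : Formula}
    (h : ∀ {A : Type} (M : Interp A), M.Sat φ → M.Sat ψ → M.Sat χ) :
    SylRule.Sound ⟨{φ, ψ}, χ⟩ :=
  fun _ _ M hM => h M (hM φ (by simp)) (hM ψ (by simp))

theorem ruleSetR_sound : ∀ R ∈ RuleSetR, R.Sound := by
  rintro R (⟨p, q, c, -, rfl⟩ | ⟨p, q, c, -, rfl⟩ | ⟨p, q, c, -, rfl⟩ | ⟨p, q, c, -, rfl⟩ |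
    ⟨p, rfl⟩ | ⟨p, c, -, rfl⟩ | ⟨p, c, -, rfl⟩ | ⟨p, q, t, rfl⟩ | ⟨p, q, q', t, rfl⟩ |
    ⟨p, q, q', t, rfl⟩ | ⟨p, q, q', t, rfl⟩)
  · exact SylRule.sound_pair fun _ ⟨a, hp, hq⟩ hqc => ⟨a, hp, hqc hq⟩
  · exact SylRule.sound_pair fun _ hpq ⟨a, hp, hc⟩ => ⟨a, hpq hp, hc⟩
  · refine SylRule.sound_pair fun M hqc ⟨a, hp, hc⟩ => ⟨a, hp, fun hq => ?_⟩
    have := hqc hq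
    rw [M.etermI_bar] at this
    exact this hc
  · exact SylRule.sound_pair fun _ hpq hqc _ hp => hqc (hpq hp)
  · exact SylRule.sound_nil fun _ _ hp => hp
  · exact SylRule.sound_singleton fun _ ⟨a, hp, _⟩ => ⟨a, hp, hp⟩
  · exact SylRule.sound_singleton fun _ hpp a hp => absurd hp (hpp hp)
  · exact SylRule.sound_singleton fun _ ⟨_, _, b, hq, _⟩ => ⟨b, hq, hq⟩
  · exact SylRule.sound_pair fun _ hp ⟨b, hq, hq'⟩ a ha => ⟨b, hq, hp ha b hq'⟩
  · exact SylRule.sound_pair fun _ ⟨a, ha, b, hq, ht⟩ hqq' => ⟨a, ha, b, hqq' hq, ht⟩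
  · exact SylRule.sound_pair fun _ hp hqq' a ha =>
      let ⟨b, hq, ht⟩ := hp ha
      ⟨b, hqq' hq, ht⟩

def Subst.id : Subst := ⟨_root_.id, _root_.id⟩

@[simp] lemma Lit.subst_id (l : Lit) : l.subst Subst.id = l := by cases l <;> rfl

@[simp] lemma BLit.subst_id (t : BLit) : t.subst Subst.id = t := by cases t <;> rfl

@[simp] lemma ETerm.subst_id (e : ETerm) : e.subst Subst.id = e := by
  cases e <;> simp [ETerm.subst]

@[simp] lemma Formula.subst_id (φ : Formula) : φ.subst Subst.id = φ := by
  cases φ <;> simp [Formula.subst]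

section Rules

variable {X : Set SylRule} {Γ : Set Formula}

lemma Derives.of_rule {R : SylRule} (hR : R ∈ X) (h : ∀ ψ ∈ R.ants, Derives X Γ ψ) :
    Derives X Γ R.con := by
  simpa using Derives.rule R Subst.id hR fun ψ hψ => by simpa using h ψ hψ

lemma Derives.of_rule_singleton {φ χ : Formula} (hR : ⟨{φ}, χ⟩ ∈ X) (hφ : Derives X Γ φ) :
    Derives X Γ χ :=
  Derives.of_rule hR fun θ hθ => by rwa [Finset.mem_singleton.mp hθ]

lemma Derives.of_rule_pair {φ ψ χ : Formula} (hR : ⟨{φ, ψ}, χ⟩ ∈ X) (hφ : Derives X Γ φ)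
    (hψ : Derives X Γ ψ) : Derives X Γ χ := by
  refine Derives.of_rule hR fun θ hθ => ?_
  rcases Finset.mem_insert.mp hθ with rfl | hθ
  · exact hφ
  · rwa [Finset.mem_singleton.mp hθ]

lemma Derives.swap {φ : Formula} (h : Derives X Γ φ) : Derives X Γ φ.swap :=
  h.ident (Or.inr rfl)

lemma Derives.of_memMod {φ : Formula} (h : MemMod Γ φ) : Derives X Γ φ :=
  let ⟨_, hψ, he⟩ := h
  (Derives.mem hψ).ident he.symm

lemma derives_D1 {p q : ℕ} {c : ETerm} (hc : c.isC)
    (h₁ : Derives RuleSetR Γ (.ex (atomE p) (atomE q)))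
    (h₂ : Derives RuleSetR Γ (.al (atomE q) c)) : Derives RuleSetR Γ (.ex (atomE p) c) :=
  Derives.of_rule_pair (Or.inl ⟨p, q, c, hc, rfl⟩) h₁ h₂

lemma derives_D2 {p q : ℕ} {c : ETerm} (hc : c.isC)
    (h₁ : Derives RuleSetR Γ (.al (atomE p) (atomE q)))
    (h₂ : Derives RuleSetR Γ (.ex (atomE p) c)) : Derives RuleSetR Γ (.ex (atomE q) c) :=
  Derives.of_rule_pair (Or.inr <| Or.inl ⟨p, q, c, hc, rfl⟩) h₁ h₂

lemma derives_D3 {p q : ℕ} {c : ETerm} (hc : c.isC)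
    (h₁ : Derives RuleSetR Γ (.al (atomE q) c.bar))
    (h₂ : Derives RuleSetR Γ (.ex (atomE p) c)) :
    Derives RuleSetR Γ (.ex (atomE p) (.lit (.neg q))) :=
  Derives.of_rule_pair (Or.inr <| Or.inr <| Or.inl ⟨p, q, c, hc, rfl⟩) h₁ h₂

lemma derives_B {p q : ℕ} {c : ETerm} (hc : c.isC)
    (h₁ : Derives RuleSetR Γ (.al (atomE p) (atomE q)))
    (h₂ : Derives RuleSetR Γ (.al (atomE q) c)) : Derives RuleSetR Γ (.al (atomE p) c) :=
  Derives.of_rule_pair (Or.inr <| Or.inr <| Or.inr <| Or.inl ⟨p, q, c, hc, rfl⟩) h₁ h₂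

lemma derives_T (p : ℕ) : Derives RuleSetR Γ (.al (atomE p) (atomE p)) :=
  Derives.of_rule (R := ⟨∅, _⟩) (Or.inr <| Or.inr <| Or.inr <| Or.inr <| Or.inl ⟨p, rfl⟩)
    (by simp)

lemma derives_I {p : ℕ} {c : ETerm} (hc : c.isC) (h : Derives RuleSetR Γ (.ex (atomE p) c)) :
    Derives RuleSetR Γ (.ex (atomE p) (atomE p)) :=
  Derives.of_rule_singleton
    (Or.inr <| Or.inr <| Or.inr <| Or.inr <| Or.inr <| Or.inl ⟨p, c, hc, rfl⟩) h

lemma derives_II {p q : ℕ} {t : BLit} (h : Derives RuleSetR Γ (.ex (atomE p) (.ex (.pos q) t))) :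
    Derives RuleSetR Γ (.ex (atomE q) (atomE q)) :=
  Derives.of_rule_singleton
    (Or.inr <| Or.inr <| Or.inr <| Or.inr <| Or.inr <| Or.inr <| Or.inr <| Or.inl ⟨p, q, t, rfl⟩) h

lemma derives_AA {p q q' : ℕ} {t : BLit}
    (h₁ : Derives RuleSetR Γ (.al (atomE p) (.al (.pos q') t)))
    (h₂ : Derives RuleSetR Γ (.ex (atomE q) (atomE q'))) :
    Derives RuleSetR Γ (.al (atomE p) (.ex (.pos q) t)) :=
  Derives.of_rule_pair (Or.inr <| Or.inr <| Or.inr <| Or.inr <| Or.inr <| Or.inr <| Or.inr <|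
    Or.inr <| Or.inl ⟨p, q, q', t, rfl⟩) h₁ h₂

lemma derives_EE {p q q' : ℕ} {t : BLit}
    (h₁ : Derives RuleSetR Γ (.ex (atomE p) (.ex (.pos q) t)))
    (h₂ : Derives RuleSetR Γ (.al (atomE q) (atomE q'))) :
    Derives RuleSetR Γ (.ex (atomE p) (.ex (.pos q') t)) :=
  Derives.of_rule_pair (Or.inr <| Or.inr <| Or.inr <| Or.inr <| Or.inr <| Or.inr <| Or.inr <|
    Or.inr <| Or.inr <| Or.inl ⟨p, q, q', t, rfl⟩) h₁ h₂

lemma derives_AE {p q q' : ℕ} {t : BLit}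
    (h₁ : Derives RuleSetR Γ (.al (atomE p) (.ex (.pos q) t)))
    (h₂ : Derives RuleSetR Γ (.al (atomE q) (atomE q'))) :
    Derives RuleSetR Γ (.al (atomE p) (.ex (.pos q') t)) :=
  Derives.of_rule_pair (Or.inr <| Or.inr <| Or.inr <| Or.inr <| Or.inr <| Or.inr <| Or.inr <|
    Or.inr <| Or.inr <| Or.inr ⟨p, q, q', t, rfl⟩) h₁ h₂

lemma derives_absurd_of_ex_of_al {a : ℕ} {c : ETerm} (hc : c.isC)
    (hex : Derives RuleSetR Γ (.ex (atomE a) c)) (hal : Derives RuleSetR Γ (.al (atomE a) c.bar)) :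
    ∃ b, IsAbsurd b ∧ Derives RuleSetR Γ b :=
  ⟨_, ⟨atomE a, rfl⟩, derives_D3 hc hal hex⟩

end Rules

section Reachability

variable {Γ : Set Formula}

lemma Reach.derives_al {s : ℕ} {d : ETerm} (h : Reach Γ (atomE s) d) (hd : d.isC) :
    Derives RuleSetR Γ (.al (atomE s) d) := by
  rcases h with rfl | ⟨k, p, hs, hlast, hchain⟩
  · exact derives_T s
  rw [atomE_inj.mp hs]
  clear hs
  induction k generalizing p with
  | zero => exact Derives.of_memMod hlast
  | succ k ih =>
    exact derives_B hd (Derives.of_memMod (hchain 0 k.succ_pos))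
      (ih (fun i => p (i + 1)) hlast fun i hi => hchain (i + 1) (by omega))

lemma Reach.trans_memMod {c d : ETerm} {p : ℕ} (h : Reach Γ c (atomE p))
    (hpd : MemMod Γ (.al (atomE p) d)) : Reach Γ c d := by
  rcases h with rfl | ⟨k, f, rfl, hlast, hchain⟩
  · exact Or.inr ⟨0, fun _ => p, rfl, hpd, by simp⟩
  refine Or.inr ⟨k + 1, Function.update f (k + 1) p, by simp, by simpa using hpd, ?_⟩
  intro i hi
  rcases Nat.lt_succ_iff_lt_or_eq.mp hi with hi | rfl
  · simpa [Function.update_of_ne (show i ≠ k + 1 by omega),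
      Function.update_of_ne (show i + 1 ≠ k + 1 by omega)] using hchain i hi
  · simpa using hlast

lemma ReachSet.trans_memMod {V : Set ETerm} {d : ETerm} {p : ℕ} (h : ReachSet Γ V (atomE p))
    (hpd : MemMod Γ (.al (atomE p) d)) : ReachSet Γ V d :=
  let ⟨c, hc, hcp⟩ := h
  ⟨c, hc, hcp.trans_memMod hpd⟩

lemma ReachSet.mem_or_derives_al {V : Set ETerm} {d : ETerm} (h : ReachSet Γ V d)
    (hd : d.isC) : d ∈ V ∨ ∃ s, atomE s ∈ V ∧ Derives RuleSetR Γ (.al (atomE s) d) := by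
  obtain ⟨c, hc, hcd⟩ := h
  rcases hcd with rfl | ⟨k, p, rfl, hchain⟩
  · exact Or.inl hc
  · exact Or.inr ⟨p 0, hc, Reach.derives_al (Or.inr ⟨k, p, rfl, hchain⟩) hd⟩

end Reachability

def IsDerivedPair (Γ : Set Formula) (V : Set ETerm) : Prop :=
  ∃ p c, ETerm.isC c ∧ V = {atomE p, c} ∧ Derives RuleSetR Γ (.ex (atomE p) c)

namespace IsDerivedPair

variable {Γ : Set Formula} {V : Set ETerm}

lemma derives_ex_of_mem (hV : IsDerivedPair Γ V) {s : ℕ} {c : ETerm} (hs : atomE s ∈ V)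
    (hc : c ∈ V) : Derives RuleSetR Γ (.ex (atomE s) c) := by
  obtain ⟨p, c₀, hc₀, rfl, h⟩ := hV
  simp only [Set.mem_insert_iff, Set.mem_singleton_iff, atomE_inj] at hs hc
  rcases hs with rfl | rfl <;> rcases hc with rfl | rfl
  · exact derives_I hc₀ h
  · exact h
  · exact h.swap
  · exact derives_I (c := atomE p) trivial h.swap

lemma derives_ex_of_reachSet (hV : IsDerivedPair Γ V) {s : ℕ} {d : ETerm} (hs : atomE s ∈ V)
    (h : ReachSet Γ V d) (hd : d.isC) : Derives RuleSetR Γ (.ex (atomE s) d) := by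
  rcases h.mem_or_derives_al hd with hdV | ⟨s', hs', hs'd⟩
  · exact hV.derives_ex_of_mem hs hdV
  · exact derives_D1 hd (hV.derives_ex_of_mem hs hs') hs'd

lemma derives_ex_of_reachSet_atoms (hV : IsDerivedPair Γ V) {q o : ℕ} (hq : ReachSet Γ V (atomE q))
    (ho : ReachSet Γ V (atomE o)) : Derives RuleSetR Γ (.ex (atomE q) (atomE o)) := by
  rcases hq.mem_or_derives_al trivial with hqV | ⟨s, hs, hsq⟩
  · exact hV.derives_ex_of_reachSet hqV ho trivial
  · exact derives_D2 trivial hsq (hV.derives_ex_of_reachSet hs ho trivial)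

lemma exists_ex_al_of_reachSet (hV : IsDerivedPair Γ V) {d₁ d₂ : ETerm}
    (h₁ : ReachSet Γ V d₁) (h₂ : ReachSet Γ V d₂) (hd₁ : d₁.isC) (hd₂ : d₂.isC) (hne : d₁ ≠ d₂) :
    ∃ a, (Derives RuleSetR Γ (.ex (atomE a) d₁) ∧ Derives RuleSetR Γ (.al (atomE a) d₂)) ∨
      (Derives RuleSetR Γ (.ex (atomE a) d₂) ∧ Derives RuleSetR Γ (.al (atomE a) d₁)) := by
  rcases h₂.mem_or_derives_al hd₂ with hd₂V | ⟨s, hs, hsd₂⟩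
  · rcases h₁.mem_or_derives_al hd₁ with hd₁V | ⟨s, hs, hsd₁⟩
    · obtain ⟨p, c, -, rfl, h⟩ := hV
      simp only [Set.mem_insert_iff, Set.mem_singleton_iff] at hd₁V hd₂V
      rcases hd₁V with rfl | rfl <;> rcases hd₂V with rfl | rfl
      · exact absurd rfl hne
      · exact ⟨p, Or.inr ⟨h, derives_T p⟩⟩
      · exact ⟨p, Or.inl ⟨h, derives_T p⟩⟩
      · exact absurd rfl hne
    · exact ⟨s, Or.inr ⟨hV.derives_ex_of_mem hs hd₂V, hsd₁⟩⟩
  · exact ⟨s, Or.inl ⟨hV.derives_ex_of_reachSet hs h₁ hd₁, hsd₂⟩⟩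

end IsDerivedPair

section Witnesses

variable {Γ : Set Formula}

lemma isDerivedPair_of_mem_bSet (k : ℕ) : ∀ x ∈ BSet Γ k, IsDerivedPair Γ x.1 := by
  induction k with
  | zero =>
    rintro _ ⟨p, c, hc, hmem, rfl⟩
    exact ⟨p, c, hc, rfl, Derives.of_memMod hmem⟩
  | succ k ih =>
    rintro x (hx | ⟨q, _, -, ⟨y, hy, t, hyq⟩, rfl⟩)
    · exact ih x hx
    · have hyV := ih y hy
      obtain ⟨p, _, -, hyp, -⟩ := id hyV
      have hp : atomE p ∈ y.1 := hyp ▸ Set.mem_insert _ _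
      exact ⟨q, atomE q, trivial, (Set.pair_eq_singleton _).symm,
        derives_I (c := atomE q) trivial (derives_II (hyV.derives_ex_of_reachSet hp hyq trivial))⟩

lemma isDerivedPair_of_mem_bAll {V : Set ETerm} {i : ℕ} (h : (V, i) ∈ BAll Γ) :
    IsDerivedPair Γ V :=
  let ⟨k, hk⟩ := Set.mem_iUnion.mp h
  isDerivedPair_of_mem_bSet k _ hk

theorem derives_absurd_of_condC (hC : CondC Γ) : ∃ b, IsAbsurd b ∧ Derives RuleSetR Γ b := by
  obtain ⟨V, _, W, _, hV, hW, q, o, r, hcase⟩ := hC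
  replace hV := isDerivedPair_of_mem_bAll hV
  rcases hcase with ⟨hq, hnq⟩ | ⟨hqr, hor, hqo⟩ | ⟨hqr, hor, hoq⟩ | ⟨hqr, hor, hWq, hWo⟩
  · obtain ⟨a, ⟨hex, hal⟩ | ⟨hex, hal⟩⟩ :=
      hV.exists_ex_al_of_reachSet hq hnq trivial trivial (by simp [atomE])
    · exact derives_absurd_of_ex_of_al (c := atomE q) trivial hex hal
    · exact derives_absurd_of_ex_of_al (c := .lit (.neg q)) trivial hex hal
  · replace hqo := hqo.derives_al trivial
    obtain ⟨a, ⟨hex, hal⟩ | ⟨hex, hal⟩⟩ :=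
      hV.exists_ex_al_of_reachSet hqr hor trivial trivial (by simp)
    · exact derives_absurd_of_ex_of_al (c := .ex (.pos o) (.neg r)) trivial (derives_EE hex hqo) hal
    · exact derives_absurd_of_ex_of_al (c := .al (.pos o) (.pos r)) trivial hex (derives_AE hal hqo)
  · replace hoq := hoq.derives_al trivial
    obtain ⟨a, ⟨hex, hal⟩ | ⟨hex, hal⟩⟩ :=
      hV.exists_ex_al_of_reachSet hqr hor trivial trivial (by simp)
    · exact derives_absurd_of_ex_of_al (c := .al (.pos q) (.neg r)) trivial hex (derives_AE hal hoq)
    · exact derives_absurd_of_ex_of_al (c := .ex (.pos q) (.pos r)) trivial (derives_EE hex hoq) hal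
  · have hqo := (isDerivedPair_of_mem_bAll hW).derives_ex_of_reachSet_atoms hWq hWo
    obtain ⟨a, ⟨hex, hal⟩ | ⟨hex, hal⟩⟩ :=
      hV.exists_ex_al_of_reachSet hqr hor trivial trivial (by simp)
    · exact derives_absurd_of_ex_of_al (c := .al (.pos q) (.neg r)) trivial hex (derives_AA hal hqo)
    · exact derives_absurd_of_ex_of_al (c := .al (.pos o) (.pos r)) trivial hex
        (derives_AA hal hqo.swap)

end Witnesses

section Model

variable {Γ : Set Formula}

lemma reachSet_of_mem {V : Set ETerm} {c : ETerm} (h : c ∈ V) : ReachSet Γ V c :=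
  ⟨c, h, Or.inl rfl⟩

lemma reachSet_singleton {c d : ETerm} : ReachSet Γ {c} d ↔ Reach Γ c d := by
  simp [ReachSet]

lemma singleton_mem_bAll {x : Set ETerm × ℕ} (hx : x ∈ BAll Γ) {q : ℕ} {t : BLit}
    (h : ReachSet Γ x.1 (.ex (.pos q) t)) {j : ℕ} (hj : j = 1 ∨ j = 2) :
    (({atomE q} : Set ETerm), j) ∈ BAll Γ :=
  let ⟨k, hk⟩ := Set.mem_iUnion.mp hx
  Set.mem_iUnion.mpr ⟨k + 1, Or.inr ⟨q, j, hj, ⟨x, hk, t, h⟩, rfl⟩⟩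

def model (Γ : Set Formula) : Interp (Option (BAll Γ)) where
  up p := {x | ∃ v : BAll Γ, x = some v ∧ ReachSet Γ v.1.1 (atomE p)}
  br r := {ab | ∃ v w : BAll Γ, ab = (some v, some w) ∧
    ((∃ o, ReachSet Γ v.1.1 (.al (.pos o) (.pos r)) ∧ ReachSet Γ w.1.1 (atomE o)) ∨
      ∃ q, w.1 = ({atomE q}, 1) ∧ ReachSet Γ v.1.1 (.ex (.pos q) (.pos r)))}

lemma some_mem_model_up {v : BAll Γ} {p : ℕ} :
    some v ∈ (model Γ).up p ↔ ReachSet Γ v.1.1 (atomE p) :=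
  ⟨fun ⟨_, hw, h⟩ => by cases hw; exact h, fun h => ⟨v, rfl, h⟩⟩

lemma some_some_mem_model_br {v w : BAll Γ} {r : ℕ} :
    (some v, some w) ∈ (model Γ).br r ↔
      (∃ o, ReachSet Γ v.1.1 (.al (.pos o) (.pos r)) ∧ ReachSet Γ w.1.1 (atomE o)) ∨
        ∃ q, w.1 = ({atomE q}, 1) ∧ ReachSet Γ v.1.1 (.ex (.pos q) (.pos r)) :=
  ⟨fun ⟨_, _, hvw, h⟩ => by cases hvw; exact h, fun h => ⟨v, w, rfl, h⟩⟩

lemma model_mem_lit (hC : ¬ CondC Γ) (v : BAll Γ) {l : Lit} (h : ReachSet Γ v.1.1 (.lit l)) :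
    some v ∈ (model Γ).etermI (.lit l) := by
  cases l with
  | pos q => exact some_mem_model_up.mpr h
  | neg q => exact fun hq => hC ⟨_, _, _, _, v.2, v.2, q, q, 0, Or.inl ⟨some_mem_model_up.mp hq, h⟩⟩

lemma model_mem_ex (hC : ¬ CondC Γ) (v : BAll Γ) {q : ℕ} {t : BLit}
    (h : ReachSet Γ v.1.1 (.ex (.pos q) t)) : some v ∈ (model Γ).etermI (.ex (.pos q) t) := by
  cases t with
  | pos r =>
    refine ⟨some ⟨_, singleton_mem_bAll v.2 h (Or.inl rfl)⟩,
      some_mem_model_up.mpr (reachSet_of_mem rfl), ?_⟩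
    exact some_some_mem_model_br.mpr (Or.inr ⟨q, rfl, h⟩)
  | neg r =>
    refine ⟨some ⟨_, singleton_mem_bAll v.2 h (Or.inr rfl)⟩,
      some_mem_model_up.mpr (reachSet_of_mem rfl), fun hr => ?_⟩
    rcases some_some_mem_model_br.mp hr with ⟨o, hvo, hqo⟩ | ⟨_, hw, -⟩
    · exact hC ⟨_, _, _, _, v.2, v.2, q, o, r,
        Or.inr <| Or.inl ⟨h, hvo, reachSet_singleton.mp hqo⟩⟩
    · simp at hw

lemma model_mem_al (hC : ¬ CondC Γ) (v : BAll Γ) {q : ℕ} {t : BLit}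
    (h : ReachSet Γ v.1.1 (.al (.pos q) t)) : some v ∈ (model Γ).etermI (.al (.pos q) t) := by
  rintro _ ⟨w, rfl, hwq⟩
  cases t with
  | pos r => exact some_some_mem_model_br.mpr (Or.inl ⟨q, h, hwq⟩)
  | neg r =>
    intro hr
    rcases some_some_mem_model_br.mp hr with ⟨o, hvo, hwo⟩ | ⟨o, hw, hvo⟩
    · exact hC ⟨_, _, _, _, v.2, w.2, q, o, r, Or.inr <| Or.inr <| Or.inr ⟨h, hvo, hwq, hwo⟩⟩
    · rw [hw, reachSet_singleton] at hwq
      exact hC ⟨_, _, _, _, v.2, v.2, q, o, r, Or.inr <| Or.inr <| Or.inl ⟨h, hvo, hwq⟩⟩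

theorem model_mem_of_reachSet (hC : ¬ CondC Γ) (v : BAll Γ) {d : ETerm} (hd : d.isC)
    (h : ReachSet Γ v.1.1 d) : some v ∈ (model Γ).etermI d := by
  match d, hd, h with
  | .lit _, _, h => exact model_mem_lit hC v h
  | .ex (.pos _) _, _, h => exact model_mem_ex hC v h
  | .al (.pos _) _, _, h => exact model_mem_al hC v h
  | .ex (.neg _) _, hd, _ | .al (.neg _) _, hd, _ => exact hd.elim

theorem model_satSet (hC : ¬ CondC Γ) (hΓ : Γ ⊆ FragR) : (model Γ).SatSet Γ := by
  intro φ hφ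
  obtain ⟨p, c, hc, rfl | rfl | rfl | rfl⟩ := hΓ hφ
  · have hv : (({atomE p, c} : Set ETerm), 0) ∈ BAll Γ :=
      Set.mem_iUnion.mpr ⟨0, p, c, hc, ⟨_, hφ, Or.inl rfl⟩, rfl⟩
    exact ⟨some ⟨_, hv⟩, model_mem_of_reachSet hC ⟨_, hv⟩ trivial (reachSet_of_mem (by simp)),
      model_mem_of_reachSet hC ⟨_, hv⟩ hc (reachSet_of_mem (by simp))⟩
  · have hv : (({atomE p, c} : Set ETerm), 0) ∈ BAll Γ :=
      Set.mem_iUnion.mpr ⟨0, p, c, hc, ⟨_, hφ, Or.inr rfl⟩, rfl⟩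
    exact ⟨some ⟨_, hv⟩, model_mem_of_reachSet hC ⟨_, hv⟩ hc (reachSet_of_mem (by simp)),
      model_mem_of_reachSet hC ⟨_, hv⟩ trivial (reachSet_of_mem (by simp))⟩
  · rintro _ ⟨v, rfl, hv⟩
    exact model_mem_of_reachSet hC v hc (hv.trans_memMod ⟨_, hφ, Or.inl rfl⟩)
  · rintro _ hxc ⟨v, rfl, hv⟩
    have hcbar := model_mem_of_reachSet hC v hc.bar (hv.trans_memMod
      ⟨_, hφ, Or.inr (by rw [Formula.swap, ETerm.bar_bar]; rfl)⟩)
    rw [Interp.etermI_bar] at hcbar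
    exact hcbar hxc

theorem satisfiable_of_not_condC (hC : ¬ CondC Γ) (hΓ : Γ ⊆ FragR) : Satisfiable Γ :=
  ⟨Option (BAll Γ), ⟨none⟩, model Γ, model_satSet hC hΓ⟩

end Model

theorem R_refutation_tfae_general (Γ : Set Formula) (hΓ : Γ ⊆ FragR) :
    ((∃ b, IsAbsurd b ∧ Derives RuleSetR Γ b) ↔ ¬ Satisfiable Γ) ∧
    (¬ Satisfiable Γ ↔ CondC Γ) := by
  have sound : (∃ b, IsAbsurd b ∧ Derives RuleSetR Γ b) → ¬ Satisfiable Γ := by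
    rintro ⟨b, hb, hder⟩ ⟨A, hA, M, hM⟩
    exact M.not_sat_of_isAbsurd hb (hder.entails ruleSetR_sound A hA M hM)
  have complete : ¬ Satisfiable Γ → CondC Γ := fun h =>
    by_contra fun hC => h (satisfiable_of_not_condC hC hΓ)
  exact ⟨⟨sound, fun h => derives_absurd_of_condC (complete h)⟩,
    ⟨complete, fun hC => sound (derives_absurd_of_condC hC)⟩⟩

/-- for finite non-empty `Γ ⊆ R` the following are equivalent:
`Γ` derives an absurdity, `Γ` is unsatisfiable, condition (C) holds. -/
theorem R_refutation_tfae (Γ : Set Formula) (hfin : Γ.Finite)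
    (hne : Γ.Nonempty) (hΓ : Γ ⊆ FragR) :
    ((∃ b, IsAbsurd b ∧ Derives RuleSetR Γ b) ↔ ¬ Satisfiable Γ) ∧
    (¬ Satisfiable Γ ↔ CondC Γ) :=
  R_refutation_tfae_general Γ hΓ

end Syllogistic
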